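/- Let A and B be real m×n matrices satisfying Aᵀ B = 0 and A Bᵀ = 0. Then ‖A + B‖_* = ‖A‖_* + ‖B‖_*. -/

import Mathlib

/-!
If `AᵀB = 0` and `ABᵀ = 0`, the cross terms of `(A + B)ᵀ(A + B)` vanish, so it equals
`P + Q` with `P = AᵀA`, `Q = BᵀB`, and `PQ = Aᵀ(ABᵀ)B = 0`. For positive semidefinite `P`, `Q`
with `PQ = 0` the square roots also annihilate each other (as `Q = √Q √Qᴴ`, `XQ = 0` iff
`X√Q = 0`), hence `√P + √Q` is a positive semidefinite square root of `P + Q`, so it is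
`√(P + Q)`. Taking traces gives the claim.
-/

open Matrix

noncomputable def nuclearNorm {m n : Type*} [Fintype m] [Fintype n] [DecidableEq n]
    (A : Matrix m n ℝ) : ℝ :=
  (((Matrix.posSemidef_conjTranspose_mul_self A).1.eigenvectorUnitary : Matrix n n ℝ) *
    diagonal ((RCLike.ofReal : ℝ → ℝ) ∘ Real.sqrt ∘
      (Matrix.posSemidef_conjTranspose_mul_self A).1.eigenvalues) *
    (star ((Matrix.posSemidef_conjTranspose_mul_self A).1.eigenvectorUnitary : Matrix n n ℝ))).trace

open scoped MatrixOrder ComplexOrder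

namespace Matrix.PosSemidef

variable {n p 𝕜 : Type*} [Fintype n] [DecidableEq n] [RCLike 𝕜] {P Q : Matrix n n 𝕜}

lemma cfcSqrt_mul_cfcSqrt_conjTranspose (hQ : Q.PosSemidef) :
    CFC.sqrt Q * (CFC.sqrt Q)ᴴ = Q := by
  rw [← star_eq_conjTranspose, (CFC.sqrt_nonneg Q).isSelfAdjoint.star_eq,
    CFC.sqrt_mul_sqrt_self Q hQ.nonneg]

lemma cfcSqrt_mul_eq_zero_iff (hQ : Q.PosSemidef) {X : Matrix n p 𝕜} :
    CFC.sqrt Q * X = 0 ↔ Q * X = 0 := by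
  conv_rhs => rw [← hQ.cfcSqrt_mul_cfcSqrt_conjTranspose]
  rw [self_mul_conjTranspose_mul_eq_zero, ← star_eq_conjTranspose,
    (CFC.sqrt_nonneg Q).isSelfAdjoint.star_eq]

lemma mul_cfcSqrt_eq_zero_iff (hQ : Q.PosSemidef) {X : Matrix p n 𝕜} :
    X * CFC.sqrt Q = 0 ↔ X * Q = 0 := by
  conv_rhs => rw [← hQ.cfcSqrt_mul_cfcSqrt_conjTranspose]
  rw [mul_self_mul_conjTranspose_eq_zero]

lemma cfcSqrt_mul_cfcSqrt_eq_zero (hP : P.PosSemidef) (hQ : Q.PosSemidef) (h : P * Q = 0) :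
    CFC.sqrt P * CFC.sqrt Q = 0 := by
  rwa [hP.cfcSqrt_mul_eq_zero_iff, hQ.mul_cfcSqrt_eq_zero_iff]

lemma cfcSqrt_add_of_mul_eq_zero (hP : P.PosSemidef) (hQ : Q.PosSemidef) (h : P * Q = 0) :
    CFC.sqrt (P + Q) = CFC.sqrt P + CFC.sqrt Q := by
  have hQP : Q * P = 0 := by
    rw [← hP.1.eq, ← hQ.1.eq, ← conjTranspose_mul, h, conjTranspose_zero]
  refine CFC.sqrt_unique ?_ (add_nonneg (CFC.sqrt_nonneg P) (CFC.sqrt_nonneg Q))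
  rw [add_mul, mul_add, mul_add, CFC.sqrt_mul_sqrt_self P hP.nonneg,
    CFC.sqrt_mul_sqrt_self Q hQ.nonneg, cfcSqrt_mul_cfcSqrt_eq_zero hP hQ h,
    cfcSqrt_mul_cfcSqrt_eq_zero hQ hP hQP, add_zero, zero_add]

end Matrix.PosSemidef

lemma nuclearNorm_eq_trace_cfcSqrt {m n : Type*} [Fintype m] [Fintype n] [DecidableEq n]
    (A : Matrix m n ℝ) : nuclearNorm A = (CFC.sqrt (Aᴴ * A)).trace := by
  have hA := posSemidef_conjTranspose_mul_self A
  rw [CFC.sqrt_eq_real_sqrt _ hA.nonneg, cfcₙ_eq_cfc, IsHermitian.cfc_eq hA.1,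
    IsHermitian.cfc, Unitary.conjStarAlgAut_apply, nuclearNorm]

lemma Matrix.conjTranspose_mul_self_add {m n 𝕜 : Type*} [Fintype m] [RCLike 𝕜]
    {A B : Matrix m n 𝕜} (h : Aᴴ * B = 0) :
    (A + B)ᴴ * (A + B) = Aᴴ * A + Bᴴ * B := by
  have h' : Bᴴ * A = 0 := by
    rw [← conjTranspose_conjTranspose A, ← conjTranspose_mul, h, conjTranspose_zero]
  rw [conjTranspose_add, Matrix.add_mul, Matrix.mul_add, Matrix.mul_add, h, h', add_zero,
    zero_add]

/-- **Additivity of the nuclear norm for matrices with orthogonal row and column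
spaces**: if `Aᵀ B = 0` and `A Bᵀ = 0` then `‖A + B‖_* = ‖A‖_* + ‖B‖_*`. -/
theorem nuclearNorm_add_of_orthogonal (m n : ℕ)
    (A B : Matrix (Fin m) (Fin n) ℝ)
    (h₁ : Aᵀ * B = 0) (h₂ : A * Bᵀ = 0) :
    nuclearNorm (A + B) = nuclearNorm A + nuclearNorm B := by
  simp only [← conjTranspose_eq_transpose_of_trivial] at h₁ h₂
  have hGram : (Aᴴ * A) * (Bᴴ * B) = 0 := by
    rw [Matrix.mul_assoc, ← Matrix.mul_assoc A, h₂, Matrix.zero_mul, Matrix.mul_zero]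
  rw [nuclearNorm_eq_trace_cfcSqrt, nuclearNorm_eq_trace_cfcSqrt, nuclearNorm_eq_trace_cfcSqrt,
    conjTranspose_mul_self_add h₁,
    (posSemidef_conjTranspose_mul_self A).cfcSqrt_add_of_mul_eq_zero
      (posSemidef_conjTranspose_mul_self B) hGram, trace_add]
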